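/- arXiv:1303.5944 — 5 statements merged into one kernel-verified Lean document; each statement's English description precedes it below -/
import Mathlib

section
/- Fix real parameters M>0, l>0, and a with |a|<l, and assume r₊>0 satisfies Δ₋(r₊)=0 and Δ₋(r)>0 for all r>r₊. Then 3M/Ξ > r₊, V_σ(3M/Ξ) = 1/l² + (3M²/Ξ + Ξ·a²)/(((3M/Ξ)² + a²)²), and consequently sup_{r ∈ [r₊,∞)} V_σ(r) ≥ 1/l² + (3M²/Ξ + Ξ·a²)/(((3M/Ξ)² + a²)²) > 1/l². -/
open Real MeasureTheory Set Filter Topology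

/-- Δ₋(r) = (1+r²/l²)(r²+a²) − 2Mr -/
noncomputable def Dm (M l a r : ℝ) : ℝ := (1 + r^2/l^2)*(r^2+a^2) - 2*M*r

/-- V_σ(r) = Δ₋(r)/(r²+a²)² -/
noncomputable def Vsig (M l a r : ℝ) : ℝ := Dm M l a r / (r^2+a^2)^2

/-- Θ(α) = 1 if α>0, 0 if α≤0 -/
noncomputable def Th (α : ℝ) : ℝ := if 0 < α then 1 else 0

/-- V_junk -/
noncomputable def Vjunk (M l a α r : ℝ) : ℝ :=
  -(3*r^2*(Dm M l a r)^2/(r^2+a^2)^4)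
  + Dm M l a r * (5*r^4/l^2 + 3*r^2*(1+a^2/l^2) - 4*M*r + a^2)/(r^2+a^2)^3
  - (2/l^2) * (Dm M l a r * r^2/(r^2+a^2)^2)
  - (α/l^2) * (Dm M l a r /(r^2+a^2)^2) * Th α * a^2

/-- V_mass -/
noncomputable def Vmass (M l a α r : ℝ) : ℝ :=
  ((2-α)/l^2) * (Dm M l a r * r^2/(r^2+a^2)^2)

/-- The full potential in the tortoise coordinate, with semiclassical parameter h. -/
noncomputable def Vfull (M l a α : ℝ) (R : ℝ → ℝ) (h x : ℝ) : ℝ :=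
  Vsig M l a (R x) + h^2 * (Vjunk M l a α (R x) + Vmass M l a α (R x))

/-- κ is an eigenvalue of the Dirichlet problem P_DD(h). -/
def IsDirichletEigenvalue (M l a α : ℝ) (R : ℝ → ℝ) (xmax h κ : ℝ) : Prop :=
  ∃ u : ℝ → ℝ,
    (∃ x ∈ Set.Ico xmax (π/2), u x ≠ 0) ∧
    ContDiffOn ℝ 2 u (Set.Ico xmax (π/2)) ∧
    (∀ x ∈ Set.Ioo xmax (π/2),
      -h^2 * deriv (deriv u) x + Vfull M l a α R h x * u x = κ * u x) ∧
    u xmax = 0 ∧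
    MeasureTheory.IntegrableOn (fun x => (deriv u x)^2 + (R x)^2 * (u x)^2)
      (Set.Ioo xmax (π/2))

/-
The key identity is `V_σ(r) = 1/l² + (Ξ (r² + a²) − 2 M r)/(r² + a²)²`: the numerator is the quadratic
`Ξ r² − 2 M r + Ξ a²` in `r`, and at `r = 3M/Ξ` it equals `3M²/Ξ + Ξ a² > 0`. Since `Δ₋(r) ≥ r² − 2 M r`,
the horizon satisfies `r₊ ≤ 2M < 3M ≤ 3M/Ξ`, so this point lies in `[r₊, ∞)`; there
`V_σ(r) ≤ 1/r² + 1/l² ≤ 1/r₊² + 1/l²`, so the supremum is a genuine one.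
-/

section Potential

variable {M l a r : ℝ}

lemma le_two_mul_of_Dm_nonpos (hr : 0 < r) (h : Dm M l a r ≤ 0) : r ≤ 2 * M := by
  have hge : r ^ 2 - 2 * M * r ≤ Dm M l a r := by
    unfold Dm
    nlinarith [mul_nonneg (div_nonneg (sq_nonneg r) (sq_nonneg l)) (add_nonneg (sq_nonneg r) (sq_nonneg a)),
      sq_nonneg a]
  nlinarith

lemma Vsig_eq_inv_sq_add (hra : r ^ 2 + a ^ 2 ≠ 0) :
    Vsig M l a r = 1 / l ^ 2 + ((1 - a ^ 2 / l ^ 2) * (r ^ 2 + a ^ 2) - 2 * M * r) / (r ^ 2 + a ^ 2) ^ 2 := by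
  unfold Vsig Dm
  field_simp
  ring

lemma Vsig_le_inv_sq_add_inv_sq (hM : 0 ≤ M) (hr : 0 < r) : Vsig M l a r ≤ 1 / r ^ 2 + 1 / l ^ 2 := by
  have hra : 0 < r ^ 2 + a ^ 2 := by positivity
  calc Vsig M l a r ≤ (1 + r ^ 2 / l ^ 2) * (r ^ 2 + a ^ 2) / (r ^ 2 + a ^ 2) ^ 2 := by
        unfold Vsig Dm
        gcongr
        nlinarith
    _ = 1 / (r ^ 2 + a ^ 2) + r ^ 2 / (r ^ 2 + a ^ 2) * (1 / l ^ 2) := by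
        field_simp
    _ ≤ 1 / r ^ 2 + 1 * (1 / l ^ 2) := by
        gcongr
        · nlinarith [sq_nonneg a]
        · exact div_le_one_of_le₀ (by nlinarith [sq_nonneg a]) hra.le
    _ = 1 / r ^ 2 + 1 / l ^ 2 := by ring

lemma bddAbove_Vsig_image_Ici (hM : 0 ≤ M) (hr : 0 < r) : BddAbove (Vsig M l a '' Ici r) := by
  refine ⟨1 / r ^ 2 + 1 / l ^ 2, ?_⟩
  rintro _ ⟨s, hs, rfl⟩
  calc Vsig M l a s ≤ 1 / s ^ 2 + 1 / l ^ 2 := Vsig_le_inv_sq_add_inv_sq hM (hr.trans_le hs)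
    _ ≤ 1 / r ^ 2 + 1 / l ^ 2 := by gcongr; exact hs

lemma Vsig_three_mul_div (hM : 0 < M) (hΞ : 1 - a ^ 2 / l ^ 2 ≠ 0) :
    Vsig M l a (3 * M / (1 - a ^ 2 / l ^ 2)) =
      1 / l ^ 2 + (3 * M ^ 2 / (1 - a ^ 2 / l ^ 2) + (1 - a ^ 2 / l ^ 2) * a ^ 2)
        / ((3 * M / (1 - a ^ 2 / l ^ 2)) ^ 2 + a ^ 2) ^ 2 := by
  have hr₀ : 3 * M / (1 - a ^ 2 / l ^ 2) ≠ 0 := div_ne_zero (by positivity) hΞ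
  rw [Vsig_eq_inv_sq_add (by positivity)]
  congr 2
  field_simp
  ring

lemma one_sub_sq_div_sq_mem_Ioc (ha : |a| < l) : 1 - a ^ 2 / l ^ 2 ∈ Ioc 0 1 := by
  have hl : 0 < l := (abs_nonneg a).trans_lt ha
  have ha2 : a ^ 2 < l ^ 2 := by simpa only [sq_abs] using pow_lt_pow_left₀ ha (abs_nonneg a) two_ne_zero
  constructor
  · rw [sub_pos, div_lt_one (by positivity)]
    exact ha2
  · have : 0 ≤ a ^ 2 / l ^ 2 := by positivity
    linarith

end Potential

theorem statement7_general (M l a : ℝ) (hM : 0 < M) (ha : |a| < l)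
    (rp : ℝ) (hrp : 0 < rp) (hrp0 : Dm M l a rp = 0) :
    rp < 3*M/(1 - a^2/l^2) ∧
    Vsig M l a (3*M/(1 - a^2/l^2)) =
      1/l^2 + (3*M^2/(1 - a^2/l^2) + (1 - a^2/l^2)*a^2)
        /(((3*M/(1 - a^2/l^2))^2 + a^2)^2) ∧
    sSup (Vsig M l a '' Set.Ici rp) ≥
      1/l^2 + (3*M^2/(1 - a^2/l^2) + (1 - a^2/l^2)*a^2)
        /(((3*M/(1 - a^2/l^2))^2 + a^2)^2) ∧
    1/l^2 < 1/l^2 + (3*M^2/(1 - a^2/l^2) + (1 - a^2/l^2)*a^2)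
        /(((3*M/(1 - a^2/l^2))^2 + a^2)^2) := by
  obtain ⟨hΞ, hΞ1⟩ := one_sub_sq_div_sq_mem_Ioc ha
  have hrp_lt : rp < 3 * M / (1 - a ^ 2 / l ^ 2) :=
    calc rp ≤ 2 * M := le_two_mul_of_Dm_nonpos hrp hrp0.le
      _ < 3 * M := by linarith
      _ ≤ 3 * M / (1 - a ^ 2 / l ^ 2) := le_div_self (by positivity) hΞ hΞ1
  have hV := Vsig_three_mul_div (l := l) (a := a) hM hΞ.ne'
  have hgap : 0 < (3 * M ^ 2 / (1 - a ^ 2 / l ^ 2) + (1 - a ^ 2 / l ^ 2) * a ^ 2)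
      / ((3 * M / (1 - a ^ 2 / l ^ 2)) ^ 2 + a ^ 2) ^ 2 := by
    positivity
  refine ⟨hrp_lt, hV, ?_, by linarith⟩
  exact hV ▸ le_csSup (bddAbove_Vsig_image_Ici hM.le hrp) ⟨_, hrp_lt.le, rfl⟩

/-- the photon-sphere candidate 3M/Ξ lies beyond r₊, the value of V_σ there,
and the resulting lower bound on the supremum of V_σ over [r₊,∞). -/
theorem statement7 (M l a : ℝ) (hM : 0 < M) (hl : 0 < l) (ha : |a| < l)
    (rp : ℝ) (hrp : 0 < rp) (hrp0 : Dm M l a rp = 0)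
    (hrppos : ∀ r, rp < r → 0 < Dm M l a r) :
    rp < 3*M/(1 - a^2/l^2) ∧
    Vsig M l a (3*M/(1 - a^2/l^2)) =
      1/l^2 + (3*M^2/(1 - a^2/l^2) + (1 - a^2/l^2)*a^2)
        /(((3*M/(1 - a^2/l^2))^2 + a^2)^2) ∧
    sSup (Vsig M l a '' Set.Ici rp) ≥
      1/l^2 + (3*M^2/(1 - a^2/l^2) + (1 - a^2/l^2)*a^2)
        /(((3*M/(1 - a^2/l^2))^2 + a^2)^2) ∧
    1/l^2 < 1/l^2 + (3*M^2/(1 - a^2/l^2) + (1 - a^2/l^2)*a^2)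
        /(((3*M/(1 - a^2/l^2))^2 + a^2)^2) :=
  statement7_general M l a hM ha rp hrp hrp0
end

section
/- Fix real parameters M>0, l>0, a with |a|<l, and α<9/4, let E ∈ (1/l², V_max), and let δ>0 be such that [E−δ, E+δ] ⊂ (1/l², V_max). Then there exist constants D>0, δ′>0 with x_max + δ′ < π/2, and H₀>0, all depending only on M, l, a, α (and E, δ), such that for every h ∈ (0,H₀], every κ ∈ (1/l², E+δ], and every nonzero twice continuously differentiable u : [x_max, π/2) → ℝ satisfying −h²·u″ + (V_σ∘R + h²·(V_junk∘R + V_mass∘R))·u = κ·u on (x_max,π/2), u(x_max)=0, and ∫_{x_max}^{π/2}(|u′|² + R²·u²) dx < ∞, one has ∫_{x_max}^{x_max+δ′} (|u′(x)|² + u(x)²) dx ≤ D·e^{−D/h}·∫_{x_max}^{π/2} u(x)² dx. -/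
/-!
Near `x_max` the potential exceeds `E + δ ≥ κ` by a margin `c > 0` (for small `h` the
`h²`-corrections do not matter), so on `[x_max, x_max + 4δ']` the eigenfunction satisfies
`u'' = q u / h²` with `q ≥ c`. Then `(u²)'' ≥ 2 u u'' ≥ k² u²` with `k = √(2c) / h`, and together
with `u(x_max) = 0` this convexity makes `e^{-kx} u²` nondecreasing (Agmon's estimate). Hence `u²`
on `[x_max, x_max + 2δ']` is at most `e^{-kδ'}` times `u(x_max + 3δ')²`, which in turn is at most
`δ'⁻¹ ∫ u²` because `u²` is nondecreasing. The energy inequality `(u u')' ≥ u'²` bounds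
`∫ u'²` near `x_max` by values of `u u'`, which the mean value theorem controls by `u²`.
-/

open Real MeasureTheory Set Filter Topology

theorem MonotoneOn.setIntegral_Ioo_le {f : ℝ → ℝ} {a b : ℝ} (hab : a ≤ b)
    (hf : MonotoneOn f (Icc a b)) : ∫ x in Ioo a b, f x ≤ (b - a) * f b := by
  calc ∫ x in Ioo a b, f x ≤ ∫ _ in Ioo a b, f b :=
        setIntegral_mono_on ((hf.integrableOn_isCompact isCompact_Icc).mono_set
          Ioo_subset_Icc_self) (integrableOn_const measure_Ioo_lt_top.ne) measurableSet_Ioo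
          fun x hx ↦ hf (Ioo_subset_Icc_self hx) (right_mem_Icc.2 hab) hx.2.le
    _ = (b - a) * f b := by simp [Real.volume_real_Ioo_of_le hab]

theorem MonotoneOn.mul_le_setIntegral_Ioo {f : ℝ → ℝ} {a b : ℝ} (hab : a ≤ b)
    (hf : MonotoneOn f (Icc a b)) : (b - a) * f a ≤ ∫ x in Ioo a b, f x := by
  calc (b - a) * f a = ∫ _ in Ioo a b, f a := by simp [Real.volume_real_Ioo_of_le hab]
    _ ≤ ∫ x in Ioo a b, f x :=
        setIntegral_mono_on (integrableOn_const measure_Ioo_lt_top.ne)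
          ((hf.integrableOn_isCompact isCompact_Icc).mono_set Ioo_subset_Icc_self)
          measurableSet_Ioo fun x hx ↦ hf (left_mem_Icc.2 hab) (Ioo_subset_Icc_self hx) hx.1.le

theorem MonotoneOn.sq_le_exp_mul_sq {u : ℝ → ℝ} {s : Set ℝ} {k x y : ℝ}
    (hmono : MonotoneOn (fun x ↦ exp (-(k * x)) * u x ^ 2) s) (hx : x ∈ s) (hy : y ∈ s)
    (hxy : x ≤ y) : u x ^ 2 ≤ exp (k * (x - y)) * u y ^ 2 := by
  calc u x ^ 2 = exp (k * x) * (exp (-(k * x)) * u x ^ 2) := by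
        rw [← mul_assoc, ← exp_add]; simp
    _ ≤ exp (k * x) * (exp (-(k * y)) * u y ^ 2) :=
        mul_le_mul_of_nonneg_left (hmono hx hy hxy) (exp_pos _).le
    _ = exp (k * (x - y)) * u y ^ 2 := by rw [mul_sub, sub_eq_add_neg, exp_add]; ring

section Convexity

variable {u v w : ℝ → ℝ} {a b k : ℝ}

theorem mul_sq_le_two_mul_mul_deriv (hu : ContinuousOn u (Icc a b))
    (hv : ContinuousOn v (Icc a b)) (huv : ∀ x ∈ Ioo a b, HasDerivAt u (v x) x)
    (hvw : ∀ x ∈ Ioo a b, HasDerivAt v (w x) x) (hua : u a = 0)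
    (hconv : ∀ x ∈ Ioo a b, k ^ 2 * u x ^ 2 ≤ 2 * u x * w x) :
    ∀ x ∈ Icc a b, k * u x ^ 2 ≤ 2 * u x * v x := by
  -- `g = e^{2kx} (e^{-kx} u²)'` vanishes at `a` and `g' = e^{kx} (2v² + 2uw - k²u²) ≥ 0`.
  set g : ℝ → ℝ := fun x ↦ exp (k * x) * (2 * u x * v x - k * u x ^ 2)
  have hg : MonotoneOn g (Icc a b) := by
    refine monotoneOn_of_hasDerivWithinAt_nonneg (convex_Icc a b)
      (f' := fun x ↦ exp (k * x) * (2 * v x ^ 2 + (2 * u x * w x - k ^ 2 * u x ^ 2)))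
      (by fun_prop) (fun x hx ↦ ?_) (fun x hx ↦ ?_) <;> simp only [interior_Icc] at hx ⊢
    · have hexp : HasDerivAt (fun x ↦ exp (k * x)) (exp (k * x) * k) x :=
        ((hasDerivAt_id x).const_mul k).exp.congr_deriv (by simp)
      refine (hexp.fun_mul (((huv x hx).const_mul 2).fun_mul (hvw x hx) |>.fun_sub
        (((huv x hx).fun_pow 2).const_mul k))).hasDerivWithinAt.congr_deriv ?_
      simp only [Nat.cast_ofNat]; ring
    · have := hconv x hx
      positivity
  intro x hx
  have hgx : 0 ≤ g x := by simpa [g, hua] using hg (left_mem_Icc.2 (hx.1.trans hx.2)) hx hx.1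
  exact sub_nonneg.1 ((mul_nonneg_iff_of_pos_left (exp_pos _)).1 hgx)

theorem monotoneOn_exp_neg_mul_mul_sq (hu : ContinuousOn u (Icc a b))
    (hv : ContinuousOn v (Icc a b)) (huv : ∀ x ∈ Ioo a b, HasDerivAt u (v x) x)
    (hvw : ∀ x ∈ Ioo a b, HasDerivAt v (w x) x) (hua : u a = 0)
    (hconv : ∀ x ∈ Ioo a b, k ^ 2 * u x ^ 2 ≤ 2 * u x * w x) :
    MonotoneOn (fun x ↦ exp (-(k * x)) * u x ^ 2) (Icc a b) := by
  have hagmon := mul_sq_le_two_mul_mul_deriv hu hv huv hvw hua hconv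
  refine monotoneOn_of_hasDerivWithinAt_nonneg (convex_Icc a b)
    (f' := fun x ↦ exp (-(k * x)) * (2 * u x * v x - k * u x ^ 2))
    (by fun_prop) (fun x hx ↦ ?_) (fun x hx ↦ ?_) <;> simp only [interior_Icc] at hx ⊢
  · have hexp : HasDerivAt (fun x ↦ exp (-(k * x))) (exp (-(k * x)) * -k) x :=
      ((hasDerivAt_id x).const_mul k).neg.exp.congr_deriv (by simp)
    refine (hexp.fun_mul ((huv x hx).fun_pow 2)).hasDerivWithinAt.congr_deriv ?_
    simp only [Nat.cast_ofNat]; ring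
  · have := sub_nonneg.2 (hagmon x (Ioo_subset_Icc_self hx))
    positivity

theorem monotoneOn_sq_of_mul_deriv_deriv_nonneg (hu : ContinuousOn u (Icc a b))
    (hv : ContinuousOn v (Icc a b)) (huv : ∀ x ∈ Ioo a b, HasDerivAt u (v x) x)
    (hvw : ∀ x ∈ Ioo a b, HasDerivAt v (w x) x) (hua : u a = 0)
    (huw : ∀ x ∈ Ioo a b, 0 ≤ u x * w x) :
    MonotoneOn (fun x ↦ u x ^ 2) (Icc a b) := by
  simpa using monotoneOn_exp_neg_mul_mul_sq (k := 0) hu hv huv hvw hua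
    (fun x hx ↦ by linarith [huw x hx])

theorem integral_sq_deriv_le_mul_deriv (hu : ContinuousOn u (Icc a b))
    (hv : ContinuousOn v (Icc a b)) (huv : ∀ x ∈ Ioo a b, HasDerivAt u (v x) x)
    (hvw : ∀ x ∈ Ioo a b, HasDerivAt v (w x) x) (hua : u a = 0)
    (huw : ∀ x ∈ Ioo a b, 0 ≤ u x * w x) :
    ∀ x ∈ Icc a b, ∫ t in a..x, v t ^ 2 ≤ u x * v x := by
  intro x hx
  have hsub : Icc a x ⊆ Icc a b := Icc_subset_Icc_right hx.2
  have hIoo : Ioo a x ⊆ Ioo a b := Ioo_subset_Ioo_right hx.2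
  simpa [hua] using intervalIntegral.integral_le_sub_of_hasDeriv_right_of_le hx.1
    ((hu.mono hsub).mul (hv.mono hsub)) (φ := fun t ↦ v t ^ 2)
    (g' := fun t ↦ v t * v t + u t * w t)
    (fun t ht ↦ ((huv t (hIoo ht)).mul (hvw t (hIoo ht))).hasDerivWithinAt)
    (((hv.mono hsub).pow 2).integrableOn_Icc)
    (fun t ht ↦ by nlinarith [huw t (hIoo ht)])

theorem setIntegral_Ioo_sq_deriv_le (hu : ContinuousOn u (Icc a b))
    (hv : ContinuousOn v (Icc a b)) (huv : ∀ x ∈ Ioo a b, HasDerivAt u (v x) x)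
    (hvw : ∀ x ∈ Ioo a b, HasDerivAt v (w x) x) (hua : u a = 0)
    (huw : ∀ x ∈ Ioo a b, 0 ≤ u x * w x) {m m' : ℝ} (ham : a ≤ m) (hmm' : m < m')
    (hm'b : m' ≤ b) :
    ∫ x in Ioo a m, v x ^ 2 ≤ u m' ^ 2 / (2 * (m' - m)) := by
  have hsub : Icc m m' ⊆ Icc a b := Icc_subset_Icc ham hm'b
  obtain ⟨ξ, hξ, hslope⟩ := exists_hasDerivAt_eq_slope (fun x ↦ u x ^ 2)
    (fun x ↦ 2 * u x * v x) hmm' ((hu.mono hsub).pow 2) fun x hx ↦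
      ((huv x (Ioo_subset_Ioo ham hm'b hx)).fun_pow 2).congr_deriv (by ring)
  have hξ' : ξ ∈ Icc a b := ⟨ham.trans hξ.1.le, hξ.2.le.trans hm'b⟩
  calc ∫ x in Ioo a m, v x ^ 2
      ≤ ∫ x in Ioc a ξ, v x ^ 2 :=
        setIntegral_mono_set (((hv.mono (Icc_subset_Icc_right hξ'.2)).pow 2).integrableOn_Icc
          |>.mono_set Ioc_subset_Icc_self) (Eventually.of_forall fun _ ↦ sq_nonneg _)
          (Ioo_subset_Ioc_self.trans (Ioc_subset_Ioc_right hξ.1.le)).eventuallyLE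
    _ ≤ u ξ * v ξ := by
        rw [← intervalIntegral.integral_of_le hξ'.1]
        exact integral_sq_deriv_le_mul_deriv hu hv huv hvw hua huw ξ hξ'
    _ = (u m' ^ 2 - u m ^ 2) / (2 * (m' - m)) := by
        field_simp [(sub_pos.2 hmm').ne'] at hslope ⊢; linarith
    _ ≤ u m' ^ 2 / (2 * (m' - m)) := by
        gcongr
        exact sub_le_self _ (sq_nonneg _)

end Convexity

theorem setIntegral_Ioo_sq_deriv_add_sq_le_of_convex {u v w : ℝ → ℝ} {a d k : ℝ} (hd : 0 < d)
    (hk : 0 ≤ k) (hu : ContinuousOn u (Icc a (a + 4 * d)))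
    (hv : ContinuousOn v (Icc a (a + 4 * d)))
    (huv : ∀ x ∈ Ioo a (a + 4 * d), HasDerivAt u (v x) x)
    (hvw : ∀ x ∈ Ioo a (a + 4 * d), HasDerivAt v (w x) x) (hua : u a = 0)
    (hconv : ∀ x ∈ Ioo a (a + 4 * d), k ^ 2 * u x ^ 2 ≤ 2 * u x * w x) :
    ∫ x in Ioo a (a + d), (v x ^ 2 + u x ^ 2) ≤
      (1 + 1 / (2 * d ^ 2)) * exp (-(k * d)) * ∫ x in Ioo (a + 3 * d) (a + 4 * d), u x ^ 2 := by
  have huw : ∀ x ∈ Ioo a (a + 4 * d), 0 ≤ u x * w x := fun x hx ↦ by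
    nlinarith [hconv x hx, sq_nonneg (k * u x)]
  have hmono := monotoneOn_exp_neg_mul_mul_sq hu hv huv hvw hua hconv
  have hsq := monotoneOn_sq_of_mul_deriv_deriv_nonneg hu hv huv hvw hua huw
  set B := a + 3 * d
  have hdecay : ∀ x ∈ Icc a (a + 2 * d), u x ^ 2 ≤ exp (-(k * d)) * u B ^ 2 := fun x hx ↦
    (hmono.sq_le_exp_mul_sq (y := B) ⟨hx.1, by linarith [hx.2]⟩ ⟨by linarith, by linarith⟩
      (by linarith [hx.2])).trans (by gcongr; nlinarith [hx.2])
  have hv_sq : ∫ x in Ioo a (a + d), v x ^ 2 ≤ u (a + 2 * d) ^ 2 / (2 * d) := by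
    convert setIntegral_Ioo_sq_deriv_le hu hv huv hvw hua huw (m := a + d) (m' := a + 2 * d)
      (by linarith) (by linarith) (by linarith) using 2
    ring
  have hu_sq : ∫ x in Ioo a (a + d), u x ^ 2 ≤ d * u (a + d) ^ 2 := by
    have hsq' : MonotoneOn (fun x ↦ u x ^ 2) (Icc a (a + d)) :=
      hsq.mono (Icc_subset_Icc_right (by linarith))
    simpa using hsq'.setIntegral_Ioo_le (by linarith)
  have hB : d * u B ^ 2 ≤ ∫ x in Ioo B (a + 4 * d), u x ^ 2 := by
    have hsq' : MonotoneOn (fun x ↦ u x ^ 2) (Icc B (a + 4 * d)) :=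
      hsq.mono (Icc_subset_Icc_left (by linarith))
    convert hsq'.mul_le_setIntegral_Ioo (by linarith) using 2
    ring
  have hint : ∀ f : ℝ → ℝ, ContinuousOn f (Icc a (a + 4 * d)) →
      IntegrableOn (fun x ↦ f x ^ 2) (Ioo a (a + d)) := fun f hf ↦
    ((hf.mono (Icc_subset_Icc_right (by linarith))).pow 2).integrableOn_Icc.mono_set
      Ioo_subset_Icc_self
  rw [integral_add (hint v hv) (hint u hu)]
  calc _ ≤ u (a + 2 * d) ^ 2 / (2 * d) + d * u (a + d) ^ 2 := add_le_add hv_sq hu_sq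
    _ ≤ exp (-(k * d)) * u B ^ 2 / (2 * d) + d * (exp (-(k * d)) * u B ^ 2) := by
        gcongr
        · exact hdecay _ ⟨by linarith, le_rfl⟩
        · exact hdecay _ ⟨by linarith, by linarith⟩
    _ = (1 + 1 / (2 * d ^ 2)) * exp (-(k * d)) * (d * u B ^ 2) := by field_simp; ring
    _ ≤ _ := by gcongr

theorem setIntegral_Ioo_deriv_sq_add_sq_le_of_forbidden {u V : ℝ → ℝ} {a b d h κ c : ℝ}
    (hd : 0 < d) (hdb : a + 4 * d < b) (hh : 0 < h) (hc : 0 ≤ c) (hu : ContDiffOn ℝ 2 u (Ico a b))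
    (hode : ∀ x ∈ Ioo a b, -h ^ 2 * deriv (deriv u) x + V x * u x = κ * u x)
    (hgap : ∀ x ∈ Ioo a (a + 4 * d), c ≤ V x - κ) (hua : u a = 0)
    (hint : IntegrableOn (fun x ↦ u x ^ 2) (Ioo a b)) :
    ∫ x in Ioo a (a + d), (deriv u x ^ 2 + u x ^ 2) ≤
      (1 + 1 / (2 * d ^ 2)) * exp (-(√(2 * c) * d / h)) * ∫ x in Ioo a b, u x ^ 2 := by
  -- Unlike `deriv u`, the one-sided derivative is continuous up to the endpoint `a`.
  set v := derivWithin u (Ico a b)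
  have hIcc : Icc a (a + 4 * d) ⊆ Ico a b := Icc_subset_Ico_right hdb
  have hIoo : Ioo a (a + 4 * d) ⊆ Ioo a b := Ioo_subset_Ioo_right hdb.le
  have hv : EqOn v (deriv u) (Ioo a b) := fun x hx ↦
    derivWithin_of_mem_nhds (Ico_mem_nhds_iff.2 hx)
  have huv : ∀ x ∈ Ioo a b, HasDerivAt u (v x) x := fun x hx ↦ by
    rw [hv hx]
    exact ((hu.differentiableOn two_ne_zero).differentiableAt
      (Ico_mem_nhds_iff.2 hx)).hasDerivAt
  have hvw : ∀ x ∈ Ioo a b, HasDerivAt v (deriv (deriv u) x) x := fun x hx ↦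
    ((((hu.mono Ioo_subset_Ico_self).deriv_of_isOpen isOpen_Ioo one_add_one_eq_two.le
      ).differentiableOn one_ne_zero).differentiableAt (isOpen_Ioo.mem_nhds hx)).hasDerivAt
      |>.congr_of_eventuallyEq (eventually_of_mem (isOpen_Ioo.mem_nhds hx) hv)
  have hconv : ∀ x ∈ Ioo a (a + 4 * d),
      (√(2 * c) / h) ^ 2 * u x ^ 2 ≤ 2 * u x * deriv (deriv u) x := fun x hx ↦ by
    have hw : deriv (deriv u) x = (V x - κ) * u x / h ^ 2 := by
      field_simp; linarith [hode x (hIoo hx)]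
    rw [hw, div_pow, sq_sqrt (by positivity)]
    have := mul_le_mul_of_nonneg_right (hgap x hx) (sq_nonneg (u x))
    field_simp
    nlinarith
  calc ∫ x in Ioo a (a + d), (deriv u x ^ 2 + u x ^ 2)
      = ∫ x in Ioo a (a + d), (v x ^ 2 + u x ^ 2) :=
        setIntegral_congr_fun measurableSet_Ioo fun x hx ↦ by
          rw [hv ⟨hx.1, by linarith [hx.2]⟩]
    _ ≤ (1 + 1 / (2 * d ^ 2)) * exp (-(√(2 * c) / h * d)) *
          ∫ x in Ioo (a + 3 * d) (a + 4 * d), u x ^ 2 :=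
        setIntegral_Ioo_sq_deriv_add_sq_le_of_convex hd (by positivity) (hu.continuousOn.mono hIcc)
          ((hu.continuousOn_derivWithin (uniqueDiffOn_Ico a b) one_le_two).mono hIcc)
          (fun x hx ↦ huv x (hIoo hx)) (fun x hx ↦ hvw x (hIoo hx)) hua hconv
    _ ≤ (1 + 1 / (2 * d ^ 2)) * exp (-(√(2 * c) * d / h)) * ∫ x in Ioo a b, u x ^ 2 := by
        rw [div_mul_eq_mul_div]
        refine mul_le_mul_of_nonneg_left (setIntegral_mono_set hint
          (Eventually.of_forall fun _ ↦ sq_nonneg _) ?_) (by positivity)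
        exact (Ioo_subset_Ioo (by linarith) hdb.le).eventuallyLE

theorem MeasureTheory.IntegrableOn.sq_of_add_mul_sq {f g u : ℝ → ℝ} {s : Set ℝ} {c : ℝ}
    (hc : 0 < c) (hs : MeasurableSet s)
    (hint : IntegrableOn (fun x ↦ f x ^ 2 + g x ^ 2 * u x ^ 2) s)
    (hg : ∀ x ∈ s, c ≤ g x) (hu : AEStronglyMeasurable u (volume.restrict s)) :
    IntegrableOn (fun x ↦ u x ^ 2) s := by
  refine Integrable.mono' (hint.const_mul (1 / c ^ 2)) (hu.pow 2) ?_
  filter_upwards [ae_restrict_mem hs] with x hx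
  rw [norm_of_nonneg (sq_nonneg _), one_div, inv_mul_eq_div, le_div_iff₀ (by positivity)]
  nlinarith [sq_nonneg (f x), mul_le_mul_of_nonneg_right (pow_le_pow_left₀ hc.le (hg x hx) 2)
    (sq_nonneg (u x))]

theorem exists_mul_exp_neg_div_le (K : ℝ) {A : ℝ} (hA : 0 < A) :
    ∃ D > 0, ∃ H > 0, ∀ h, 0 < h → h ≤ H → K * exp (-(A / h)) ≤ D * exp (-D / h) := by
  -- Half of the decay absorbs `K`: `e^{D/h} ≥ D/h ≥ (|K| + 1)/D` once `h ≤ D² / (|K| + 1)`.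
  refine ⟨A / 2, by positivity, (A / 2) ^ 2 / (|K| + 1), by positivity, fun h hh hhH ↦ ?_⟩
  set D := A / 2
  have hlin : |K| + 1 ≤ D * (D / h) := by
    rw [le_div_iff₀ (by positivity)] at hhH
    rw [← mul_div_assoc, le_div_iff₀ hh]
    nlinarith
  have hK : K ≤ D * exp (D / h) := by
    have hexp := mul_le_mul_of_nonneg_left (add_one_le_exp (D / h)) (by positivity : 0 ≤ D)
    rw [mul_add] at hexp
    linarith [le_abs_self K, (by positivity : 0 ≤ D)]
  calc K * exp (-(A / h)) = K * exp (-(D / h)) * exp (-D / h) := by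
        rw [mul_assoc, ← exp_add, neg_div]; congr 2; ring
    _ ≤ D * exp (-D / h) := by
        gcongr
        rwa [exp_neg, ← div_eq_mul_inv, div_le_iff₀ (exp_pos _)]

theorem exists_forall_neg_le_sq_mul {J : ℝ → ℝ} {a b ε : ℝ} (hJ : ContinuousOn J (Icc a b))
    (hε : 0 < ε) : ∃ H > 0, ∀ h, 0 < h → h ≤ H → ∀ x ∈ Icc a b, -ε ≤ h ^ 2 * J x := by
  obtain ⟨C, hC⟩ := isCompact_Icc.exists_bound_of_continuousOn hJ
  refine ⟨min 1 (ε / (|C| + 1)), by positivity, fun h hh hhH x hx ↦ ?_⟩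
  have hh2 : h ^ 2 * (|C| + 1) ≤ ε := by
    rw [← le_div_iff₀ (by positivity)]
    nlinarith [min_le_left 1 (ε / (|C| + 1)), min_le_right 1 (ε / (|C| + 1))]
  have hJx : |J x| ≤ |C| + 1 := by linarith [hC x hx, le_abs_self C, Real.norm_eq_abs (J x)]
  calc -ε ≤ -(h ^ 2 * |J x|) := by
        rw [neg_le_neg_iff]; exact (by gcongr : h ^ 2 * |J x| ≤ h ^ 2 * (|C| + 1)).trans hh2
    _ ≤ h ^ 2 * J x := by rw [← mul_neg]; gcongr; exact neg_abs_le _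

theorem exists_Icc_forall_le_add_sq_mul {W J : ℝ → ℝ} {x₀ b κ₀ : ℝ} (hx₀ : x₀ < b)
    (hW : ContinuousOn W (Iio b)) (hJ : ContinuousOn J (Iio b)) (hκ₀ : κ₀ < W x₀) :
    ∃ y, x₀ < y ∧ y < b ∧
      ∃ H > 0, ∀ h, 0 < h → h ≤ H → ∀ x ∈ Icc x₀ y, κ₀ ≤ W x + h ^ 2 * J x := by
  set ε := (W x₀ - κ₀) / 2 with hε
  obtain ⟨y, hxy, hy⟩ := mem_nhdsGE_iff_exists_Icc_subset.1 <| nhdsWithin_le_nhds <|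
    ((hW.continuousAt (Iio_mem_nhds hx₀)).eventually
      (lt_mem_nhds (a := κ₀ + ε) (by linarith))).and (Iio_mem_nhds hx₀)
  obtain ⟨H, hH, hJH⟩ :=
    exists_forall_neg_le_sq_mul (hJ.mono fun x hx ↦ (hy hx).2) (by linarith : 0 < ε)
  refine ⟨y, hxy, (hy (right_mem_Icc.2 hxy.le)).2, H, hH, fun h hh hhH x hx ↦ ?_⟩
  linarith [(hy hx).1, hJH h hh hhH x hx]

theorem continuousOn_Vsig (M l a : ℝ) : ContinuousOn (Vsig M l a) (Ioi 0) := by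
  unfold Vsig Dm
  simp only [div_eq_mul_inv]
  fun_prop (disch := intro r hr; rw [mem_Ioi] at hr; positivity)

theorem continuousOn_Vjunk_add_Vmass (M l a α : ℝ) :
    ContinuousOn (fun r ↦ Vjunk M l a α r + Vmass M l a α r) (Ioi 0) := by
  unfold Vjunk Vmass Dm
  simp only [div_eq_mul_inv]
  fun_prop (disch := intro r hr; rw [mem_Ioi] at hr; positivity)

theorem exists_Icc_forall_le_Vfull (M l a α xmax κ₀ : ℝ) (R : ℝ → ℝ)
    (hR : ∀ x < π / 2, 0 < R x)
    (hRderiv : ∀ x < π / 2, HasDerivAt R (Dm M l a (R x) / (R x ^ 2 + a ^ 2)) x)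
    (hxmax : xmax < π / 2) (hκ₀ : κ₀ < Vsig M l a (R xmax)) :
    ∃ y, xmax < y ∧ y < π / 2 ∧
      ∃ H > 0, ∀ h, 0 < h → h ≤ H → ∀ x ∈ Icc xmax y, κ₀ ≤ Vfull M l a α R h x := by
  have hRc : ContinuousOn R (Iio (π / 2)) := fun x hx ↦
    (hRderiv x hx).continuousAt.continuousWithinAt
  exact exists_Icc_forall_le_add_sq_mul hxmax ((continuousOn_Vsig M l a).comp hRc hR)
    ((continuousOn_Vjunk_add_Vmass M l a α).comp hRc hR) hκ₀

theorem statement8_general (M l a α : ℝ)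
    (rp : ℝ) (hrp : 0 < rp)
    (rmax : ℝ)
    (R : ℝ → ℝ)
    (hRim : R '' Set.Iio (π/2) = Set.Ioi rp)
    (hRderiv : ∀ x < π/2, HasDerivAt R (Dm M l a (R x) / ((R x)^2 + a^2)) x)
    (xmax : ℝ) (hxmax : xmax < π/2) (hRxmax : R xmax = rmax)
    (E δ : ℝ) (hδ : 0 < δ)
    (hEδ : Set.Icc (E - δ) (E + δ) ⊆ Set.Ioo (1/l^2) (Vsig M l a rmax)) :
    ∃ D > 0, ∃ δ' > 0, xmax + δ' < π/2 ∧ ∃ H₀ > 0,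
      ∀ h ∈ Set.Ioc 0 H₀, ∀ κ ∈ Set.Ioc (1/l^2) (E + δ), ∀ u : ℝ → ℝ,
        (∃ x ∈ Set.Ico xmax (π/2), u x ≠ 0) →
        ContDiffOn ℝ 2 u (Set.Ico xmax (π/2)) →
        (∀ x ∈ Set.Ioo xmax (π/2),
          -h^2 * deriv (deriv u) x + Vfull M l a α R h x * u x = κ * u x) →
        u xmax = 0 →
        MeasureTheory.IntegrableOn (fun x => (deriv u x)^2 + (R x)^2 * (u x)^2)
          (Set.Ioo xmax (π/2)) →
        (∫ x in Set.Ioo xmax (xmax + δ'), ((deriv u x)^2 + (u x)^2))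
          ≤ D * Real.exp (-D/h) * ∫ x in Set.Ioo xmax (π/2), (u x)^2 := by
  have hEV : E + δ < Vsig M l a rmax := (hEδ ⟨by linarith, le_rfl⟩).2
  set c := (Vsig M l a rmax - (E + δ)) / 2 with hc_def
  have hc : 0 < c := by linarith
  have hR : ∀ x < π / 2, rp < R x := fun x hx ↦ hRim.subset (mem_image_of_mem R hx)
  obtain ⟨y, hxy, hyπ, H₁, hH₁, hV⟩ := exists_Icc_forall_le_Vfull M l a α xmax (E + δ + c) R
    (fun x hx ↦ hrp.trans (hR x hx)) hRderiv hxmax (by rw [hRxmax]; linarith)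
  set d := (y - xmax) / 4 with hd_def
  have hd : 0 < d := by linarith
  obtain ⟨D, hD, H₂, hH₂, hexp⟩ :=
    exists_mul_exp_neg_div_le (1 + 1 / (2 * d ^ 2)) (A := √(2 * c) * d) (by positivity)
  refine ⟨D, hD, d, hd, by linarith, min H₁ H₂, lt_min hH₁ hH₂, ?_⟩
  rintro h ⟨hh, hhH⟩ κ ⟨-, hκ⟩ u - hu hode hu0 hint
  have hgap : ∀ x ∈ Ioo xmax (xmax + 4 * d), c ≤ Vfull M l a α R h x - κ := fun x hx ↦ by
    linarith [hV h hh (hhH.trans (min_le_left _ _)) x ⟨hx.1.le, by linarith [hx.2]⟩]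
  have hu2 := hint.sq_of_add_mul_sq hrp measurableSet_Ioo (fun x hx ↦ (hR x hx.2).le)
    ((hu.continuousOn.mono Ioo_subset_Ico_self).aestronglyMeasurable measurableSet_Ioo)
  calc _ ≤ _ := setIntegral_Ioo_deriv_sq_add_sq_le_of_forbidden hd (by linarith) hh hc.le hu
        hode hgap hu0 hu2
    _ ≤ _ := mul_le_mul_of_nonneg_right (hexp h hh (hhH.trans (min_le_right _ _)))
        (setIntegral_nonneg measurableSet_Ioo fun _ _ ↦ sq_nonneg _)

/-- exponential smallness of eigenfunctions in the forbidden region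
[x_max, x_max+δ′] for eigenvalues κ ∈ (1/l², E+δ]. -/
theorem statement8 (M l a α : ℝ) (hM : 0 < M) (hl : 0 < l) (ha : |a| < l) (hα : α < 9/4)
    (rp : ℝ) (hrp : 0 < rp) (hrp0 : Dm M l a rp = 0)
    (hrppos : ∀ r, rp < r → 0 < Dm M l a r)
    (rmax : ℝ) (hrmax : rp < rmax)
    (hmax : ∀ r ∈ Set.Ici rp, r ≠ rmax → Vsig M l a r < Vsig M l a rmax)
    (R : ℝ → ℝ) (hRmono : StrictMonoOn R (Set.Iio (π/2)))
    (hRim : R '' Set.Iio (π/2) = Set.Ioi rp)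
    (hRderiv : ∀ x < π/2, HasDerivAt R (Dm M l a (R x) / ((R x)^2 + a^2)) x)
    (hRtop : Filter.Tendsto R (nhdsWithin (π/2) (Set.Iio (π/2))) Filter.atTop)
    (xmax : ℝ) (hxmax : xmax < π/2) (hRxmax : R xmax = rmax)
    (E δ : ℝ) (hE : E ∈ Set.Ioo (1/l^2) (Vsig M l a rmax)) (hδ : 0 < δ)
    (hEδ : Set.Icc (E - δ) (E + δ) ⊆ Set.Ioo (1/l^2) (Vsig M l a rmax)) :
    ∃ D > 0, ∃ δ' > 0, xmax + δ' < π/2 ∧ ∃ H₀ > 0,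
      ∀ h ∈ Set.Ioc 0 H₀, ∀ κ ∈ Set.Ioc (1/l^2) (E + δ), ∀ u : ℝ → ℝ,
        (∃ x ∈ Set.Ico xmax (π/2), u x ≠ 0) →
        ContDiffOn ℝ 2 u (Set.Ico xmax (π/2)) →
        (∀ x ∈ Set.Ioo xmax (π/2),
          -h^2 * deriv (deriv u) x + Vfull M l a α R h x * u x = κ * u x) →
        u xmax = 0 →
        MeasureTheory.IntegrableOn (fun x => (deriv u x)^2 + (R x)^2 * (u x)^2)
          (Set.Ioo xmax (π/2)) →
        (∫ x in Set.Ioo xmax (xmax + δ'), ((deriv u x)^2 + (u x)^2))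
          ≤ D * Real.exp (-D/h) * ∫ x in Set.Ioo xmax (π/2), (u x)^2 :=
  statement8_general M l a α rp hrp rmax R hRim hRderiv xmax hxmax hRxmax E δ hδ hEδ
end

section
/- Let h > 0, let x₀ < x₁ be real numbers, let W, φ : [x₀,x₁] → ℝ be smooth, and let u : [x₀,x₁] → ℂ be smooth. Then ∫_{x₀}^{x₁} ( |d/dx(e^{φ(x)/h}·u(x))|² + h⁻²·(W(x) − φ′(x)²)·e^{2φ(x)/h}·|u(x)|² ) dx = ∫_{x₀}^{x₁} ( −ū″(x) + h⁻²·W(x)·ū(x) )·u(x)·e^{2φ(x)/h} dx + ∫_{x₀}^{x₁} h⁻¹·φ′(x)·e^{2φ(x)/h}·2i·Im(ū(x)·u′(x)) dx + (e^{2φ/h}·ū′·u)(x₁) − (e^{2φ/h}·ū′·u)(x₀), where ū denotes the complex conjugate of u. -/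
open Real MeasureTheory Set Filter Topology

/-- energy identity for the conjugated operator (complex-valued case). -/
theorem statement10 (h x₀ x₁ : ℝ) (hh : 0 < h) (hx : x₀ < x₁)
    (W φ : ℝ → ℝ) (hW : ContDiff ℝ (⊤ : ℕ∞) W) (hφ : ContDiff ℝ (⊤ : ℕ∞) φ)
    (u : ℝ → ℂ) (hu : ContDiff ℝ (⊤ : ℕ∞) u) :
    ((∫ x in x₀..x₁,
        (‖deriv (fun t => (Real.exp (φ t / h) : ℂ) * u t) x‖^2
          + (h^2)⁻¹ * (W x - (deriv φ x)^2) * Real.exp (2 * φ x / h) * ‖u x‖^2) : ℝ) : ℂ)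
    = (∫ x in x₀..x₁,
        (-(starRingEnd ℂ (deriv (deriv u) x))
          + ((h^2)⁻¹ * W x : ℝ) * starRingEnd ℂ (u x)) * u x
          * (Real.exp (2 * φ x / h) : ℝ))
      + (∫ x in x₀..x₁,
        ((h⁻¹ * deriv φ x * Real.exp (2 * φ x / h) : ℝ) : ℂ)
          * (2 * Complex.I * ((starRingEnd ℂ (u x) * deriv u x).im : ℝ)))
      + (Real.exp (2 * φ x₁ / h) : ℝ) * starRingEnd ℂ (deriv u x₁) * u x₁
      - (Real.exp (2 * φ x₀ / h) : ℝ) * starRingEnd ℂ (deriv u x₀) * u x₀ := by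
  have hh0 : h ≠ 0 := hh.ne'
  have hφd : Differentiable ℝ φ := hφ.differentiable (by simp)
  have hud : Differentiable ℝ u := hu.differentiable (by simp)
  have hu1 : ContDiff ℝ ((⊤:ℕ∞):WithTop ℕ∞) (deriv u) := (contDiff_infty_iff_deriv.mp (hu.of_le (by simp))).2
  have hu1d : Differentiable ℝ (deriv u) := hu1.differentiable (by simp)
  have hu1c : Continuous (deriv u) := hu1.continuous
  have hu2c : Continuous (deriv (deriv u)) :=
    ((contDiff_infty_iff_deriv.mp hu1).2).continuous
  have hφ1c : Continuous (deriv φ) :=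
    ((contDiff_infty_iff_deriv.mp (hφ.of_le (by simp))).2).continuous
  -- derivative of the conjugated function
  have hV : ∀ x : ℝ, HasDerivAt (fun t => ((Real.exp (φ t / h) : ℝ) : ℂ) * u t)
      (((Real.exp (φ x / h) * (deriv φ x / h) : ℝ) : ℂ) * u x
        + ((Real.exp (φ x / h) : ℝ) : ℂ) * deriv u x) x := by
    intro x
    have h1 : HasDerivAt (fun t => φ t / h) (deriv φ x / h) x :=
      (hφd x).hasDerivAt.div_const h
    exact (h1.exp.ofReal_comp).mul (hud x).hasDerivAt
  -- boundary function and its derivative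
  set F : ℝ → ℂ := fun x =>
    ((Real.exp (2 * φ x / h) : ℝ) : ℂ) * starRingEnd ℂ (deriv u x) * u x with hFdef
  set D : ℝ → ℂ := fun x =>
    (((Real.exp (2 * φ x / h) * (2 * deriv φ x / h) : ℝ) : ℂ) * starRingEnd ℂ (deriv u x)
      + ((Real.exp (2 * φ x / h) : ℝ) : ℂ) * starRingEnd ℂ (deriv (deriv u) x)) * u x
      + ((Real.exp (2 * φ x / h) : ℝ) : ℂ) * starRingEnd ℂ (deriv u x) * deriv u x
    with hDdef
  have hF : ∀ x : ℝ, HasDerivAt F (D x) x := by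
    intro x
    have h1 : HasDerivAt (fun t => 2 * φ t / h) (2 * deriv φ x / h) x :=
      (((hφd x).hasDerivAt).const_mul 2).div_const h
    have h2 : HasDerivAt (fun t => ((Real.exp (2 * φ t / h) : ℝ) : ℂ))
        ((Real.exp (2 * φ x / h) * (2 * deriv φ x / h) : ℝ) : ℂ) x :=
      h1.exp.ofReal_comp
    have h3 : HasDerivAt (fun t => starRingEnd ℂ (deriv u t))
        (starRingEnd ℂ (deriv (deriv u) x)) x := by
      simpa only [starRingEnd_apply] using ((hu1d x).hasDerivAt).star
    exact (h2.mul h3).mul (hud x).hasDerivAt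
  have hDcont : Continuous D := by
    apply Continuous.add
    · apply Continuous.mul _ hud.continuous
      apply Continuous.add
      · exact (Complex.continuous_ofReal.comp
          (((Real.continuous_exp.comp (by fun_prop)).mul (by fun_prop)))).mul
          (Complex.continuous_conj.comp hu1c)
      · exact (Complex.continuous_ofReal.comp
          (Real.continuous_exp.comp (by fun_prop))).mul
          (Complex.continuous_conj.comp hu2c)
    · exact ((Complex.continuous_ofReal.comp
        (Real.continuous_exp.comp (by fun_prop))).mul
        (Complex.continuous_conj.comp hu1c)).mul hu1c
  -- the three integrands
  set g1 : ℝ → ℂ := fun x =>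
    (-(starRingEnd ℂ (deriv (deriv u) x))
      + ((h^2)⁻¹ * W x : ℝ) * starRingEnd ℂ (u x)) * u x
      * (Real.exp (2 * φ x / h) : ℝ) with hg1def
  set g2 : ℝ → ℂ := fun x =>
    ((h⁻¹ * deriv φ x * Real.exp (2 * φ x / h) : ℝ) : ℂ)
      * (2 * Complex.I * ((starRingEnd ℂ (u x) * deriv u x).im : ℝ)) with hg2def
  have hg1cont : Continuous g1 := by
    apply Continuous.mul
    apply Continuous.mul
    · exact ((Complex.continuous_conj.comp hu2c).neg).add
        ((Complex.continuous_ofReal.comp (continuous_const.mul hW.continuous)).mul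
          (Complex.continuous_conj.comp hu.continuous))
    · exact hu.continuous
    · exact Complex.continuous_ofReal.comp (Real.continuous_exp.comp (by fun_prop))
  have hg2cont : Continuous g2 := by
    apply Continuous.mul
    · exact Complex.continuous_ofReal.comp
        ((continuous_const.mul hφ1c).mul (Real.continuous_exp.comp (by fun_prop)))
    · apply Continuous.mul continuous_const
      exact Complex.continuous_ofReal.comp
        (Complex.continuous_im.comp
          ((Complex.continuous_conj.comp hu.continuous).mul hu1c))
  -- pointwise identity
  have key : ∀ x : ℝ,
      ((‖deriv (fun t => (Real.exp (φ t / h) : ℂ) * u t) x‖^2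
        + (h^2)⁻¹ * (W x - (deriv φ x)^2) * Real.exp (2 * φ x / h) * ‖u x‖^2 : ℝ) : ℂ)
      = g1 x + g2 x + D x := by
    intro x
    have hz := (hV x).deriv
    simp only [hg1def, hg2def, hDdef]
    rw [hz]
    set a := u x with ha
    set b := deriv u x with hb
    set c := deriv (deriv u) x with hc
    set p := deriv φ x with hp
    set w := W x with hw
    set e := Real.exp (φ x / h) with hedef
    have he2 : Real.exp (2 * φ x / h) = e ^ 2 := by
      rw [hedef, sq, ← Real.exp_add]; ring_nf
    rw [he2]
    have him : (2:ℂ) * Complex.I * (((starRingEnd ℂ a * b).im : ℝ) : ℂ)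
        = starRingEnd ℂ a * b - a * starRingEnd ℂ b := by
      have h1 := Complex.sub_conj (starRingEnd ℂ a * b)
      rw [map_mul, Complex.conj_conj] at h1
      rw [h1]; push_cast; ring
    have hn1 : ((‖(((e * (p / h) : ℝ) : ℂ) * a + ((e : ℝ) : ℂ) * b)‖^2 : ℝ) : ℂ)
        = starRingEnd ℂ (((e * (p / h) : ℝ) : ℂ) * a + ((e : ℝ) : ℂ) * b)
          * ((((e * (p / h) : ℝ) : ℂ)) * a + ((e : ℝ) : ℂ) * b) := by
      rw [Complex.conj_mul']; push_cast; ring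
    have hn2 : ((‖a‖^2 : ℝ) : ℂ) = starRingEnd ℂ a * a := by
      rw [Complex.conj_mul']; push_cast; ring
    rw [Complex.ofReal_add, hn1, him]
    rw [show (((h^2)⁻¹ * (w - p^2) * e^2 * ‖a‖^2 : ℝ) : ℂ)
        = (((h^2)⁻¹ * (w - p^2) * e^2 : ℝ) : ℂ) * ((‖a‖^2 : ℝ) : ℂ) by push_cast; ring,
      hn2]
    simp only [map_add, map_mul, Complex.conj_conj, Complex.conj_ofReal, map_neg]
    push_cast
    have hhc : (h : ℂ) ≠ 0 := Complex.ofReal_ne_zero.mpr hh0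
    field_simp
    ring
  have hg1int : IntervalIntegrable g1 volume x₀ x₁ := hg1cont.intervalIntegrable _ _
  have hg2int : IntervalIntegrable g2 volume x₀ x₁ := hg2cont.intervalIntegrable _ _
  have hDint : IntervalIntegrable D volume x₀ x₁ := hDcont.intervalIntegrable _ _
  have hsplit : (∫ x in x₀..x₁, (g1 x + g2 x + D x))
      = (∫ x in x₀..x₁, g1 x) + (∫ x in x₀..x₁, g2 x) + (∫ x in x₀..x₁, D x) := by
    rw [intervalIntegral.integral_add (hg1int.add hg2int) hDint,
        intervalIntegral.integral_add hg1int hg2int]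
  have hFTC : (∫ x in x₀..x₁, D x) = F x₁ - F x₀ :=
    intervalIntegral.integral_eq_sub_of_hasDerivAt (fun x _ => hF x) hDint
  rw [← intervalIntegral.integral_ofReal,
      intervalIntegral.integral_congr (fun x _ => key x), hsplit, hFTC]
  simp only [hFdef]
  ring
end

section
/- Let h > 0, let x₀ < x₁ be real numbers, let W, φ : [x₀,x₁] → ℝ be smooth, and let u : [x₀,x₁] → ℝ be smooth with u(x₀) = u(x₁) = 0. Then ∫_{x₀}^{x₁} ( |d/dx(e^{φ(x)/h}·u(x))|² + h⁻²·(W(x) − φ′(x)²)·e^{2φ(x)/h}·u(x)² ) dx = ∫_{x₀}^{x₁} ( −u″(x) + h⁻²·W(x)·u(x) )·u(x)·e^{2φ(x)/h} dx. -/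
open Real MeasureTheory Set Filter Topology

/-- energy identity for the conjugated operator (real-valued case,
vanishing boundary values). -/
theorem statement11 (h x₀ x₁ : ℝ) (hh : 0 < h) (hx : x₀ < x₁)
    (W φ : ℝ → ℝ) (hW : ContDiff ℝ (⊤ : ℕ∞) W) (hφ : ContDiff ℝ (⊤ : ℕ∞) φ)
    (u : ℝ → ℝ) (hu : ContDiff ℝ (⊤ : ℕ∞) u) (hu0 : u x₀ = 0) (hu1 : u x₁ = 0) :
    (∫ x in x₀..x₁,
        ((deriv (fun t => Real.exp (φ t / h) * u t) x)^2
          + (h^2)⁻¹ * (W x - (deriv φ x)^2) * Real.exp (2 * φ x / h) * (u x)^2))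
    = ∫ x in x₀..x₁,
        (-(deriv (deriv u) x) + (h^2)⁻¹ * W x * u x) * u x * Real.exp (2 * φ x / h) := by
  have huI : ContDiff ℝ (↑(⊤:ℕ∞)) u := hu.of_le (by simp)
  have hφI : ContDiff ℝ (↑(⊤:ℕ∞)) φ := hφ.of_le (by simp)
  have hu' : ContDiff ℝ (↑(⊤:ℕ∞)) (deriv u) := (contDiff_infty_iff_deriv.mp huI).2
  have hu'' : ContDiff ℝ (↑(⊤:ℕ∞)) (deriv (deriv u)) := (contDiff_infty_iff_deriv.mp hu').2
  have hφ' : ContDiff ℝ (↑(⊤:ℕ∞)) (deriv φ) := (contDiff_infty_iff_deriv.mp hφI).2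
  have hφd : Differentiable ℝ φ := hφ.differentiable (by simp)
  have hud : Differentiable ℝ u := hu.differentiable (by simp)
  have hud' : Differentiable ℝ (deriv u) := hu'.differentiable (by simp)
  set F : ℝ → ℝ := fun t => Real.exp (2 * φ t / h) * (u t * deriv u t) with hFdef
  have hFd : ∀ x, HasDerivAt F
      (Real.exp (2 * φ x / h) * (2 * deriv φ x / h) * (u x * deriv u x)
        + Real.exp (2 * φ x / h)
          * (deriv u x * deriv u x + u x * deriv (deriv u) x)) x := by
    intro x
    have h1 : HasDerivAt (fun t => 2 * φ t / h) (2 * deriv φ x / h) x :=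
      ((hφd x).hasDerivAt.const_mul 2).div_const h
    exact h1.exp.mul ((hud x).hasDerivAt.mul (hud' x).hasDerivAt)
  have hv : ∀ x, deriv (fun t => Real.exp (φ t / h) * u t) x
      = Real.exp (φ x / h) * (deriv φ x / h) * u x + Real.exp (φ x / h) * deriv u x := by
    intro x
    have h1 : HasDerivAt (fun t => φ t / h) (deriv φ x / h) x :=
      (hφd x).hasDerivAt.div_const h
    exact (h1.exp.mul (hud x).hasDerivAt).deriv
  have key : ∀ x, ((deriv (fun t => Real.exp (φ t / h) * u t) x)^2
          + (h^2)⁻¹ * (W x - (deriv φ x)^2) * Real.exp (2 * φ x / h) * (u x)^2)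
      = (-(deriv (deriv u) x) + (h^2)⁻¹ * W x * u x) * u x * Real.exp (2 * φ x / h)
        + deriv F x := by
    intro x
    rw [hv x, (hFd x).deriv]
    have he : Real.exp (2 * φ x / h) = Real.exp (φ x / h) * Real.exp (φ x / h) := by
      rw [← Real.exp_add]; ring_nf
    rw [he]
    field_simp
    ring
  have hcont1 : Continuous fun x =>
      (-(deriv (deriv u) x) + (h^2)⁻¹ * W x * u x) * u x * Real.exp (2 * φ x / h) := by
    have := hu''.continuous; have := hW.continuous; have := hφ.continuous
    have := hu.continuous
    fun_prop
  have hderivF : deriv F = fun x =>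
      Real.exp (2 * φ x / h) * (2 * deriv φ x / h) * (u x * deriv u x)
        + Real.exp (2 * φ x / h)
          * (deriv u x * deriv u x + u x * deriv (deriv u) x) :=
    funext fun x => (hFd x).deriv
  have hcont2 : Continuous (deriv F) := by
    rw [hderivF]
    have := hu''.continuous; have := hu'.continuous; have := hφ'.continuous
    have := hφ.continuous; have := hu.continuous
    fun_prop
  have hint1 : IntervalIntegrable (fun x =>
      (-(deriv (deriv u) x) + (h^2)⁻¹ * W x * u x) * u x * Real.exp (2 * φ x / h))
      volume x₀ x₁ := hcont1.intervalIntegrable _ _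
  have hint2 : IntervalIntegrable (deriv F) volume x₀ x₁ :=
    hcont2.intervalIntegrable _ _
  calc (∫ x in x₀..x₁,
        ((deriv (fun t => Real.exp (φ t / h) * u t) x)^2
          + (h^2)⁻¹ * (W x - (deriv φ x)^2) * Real.exp (2 * φ x / h) * (u x)^2))
      = ∫ x in x₀..x₁,
          ((-(deriv (deriv u) x) + (h^2)⁻¹ * W x * u x) * u x * Real.exp (2 * φ x / h)
            + deriv F x) := by
        apply intervalIntegral.integral_congr
        intro x _
        exact key x
    _ = (∫ x in x₀..x₁,
          (-(deriv (deriv u) x) + (h^2)⁻¹ * W x * u x) * u x * Real.exp (2 * φ x / h))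
        + ∫ x in x₀..x₁, deriv F x := intervalIntegral.integral_add hint1 hint2
    _ = ∫ x in x₀..x₁,
          (-(deriv (deriv u) x) + (h^2)⁻¹ * W x * u x) * u x * Real.exp (2 * φ x / h) := by
        rw [intervalIntegral.integral_deriv_eq_sub
          (fun x _ => (hFd x).differentiableAt) hint2]
        simp [hFdef, hu0, hu1]
end

section
/- Fix real parameters M>0, l>0, and a with |a|<l, and let x₀ ∈ [x_max, π/2). Then for every continuously differentiable function u : [x₀, π/2) → ℂ with ∫_{x₀}^{π/2} (|u′(x)|² + R(x)²·|u(x)|²) dx < ∞, the Hardy-type inequality ∫_{x₀}^{π/2} (Δ₋(R(x))/(R(x)²+a²))·|u(x)|² dx ≤ 4l²·∫_{x₀}^{π/2} |u′(x)|² dx holds. -/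
open Real MeasureTheory Set Filter Topology

/-! With `f = R - r_max`, the tortoise equation gives `f' = w := Δ₋(R)/(R² + a²)`, and on
`[x_max, π/2)` one has `f² ≤ l² w`: this is the polynomial inequality
`(r - r_max)² (r² + a²) ≤ l² Δ₋(r)` for `r ≥ r_max`, where `V_σ'(r_max) = 0` supplies
`Δ₋'(r_max) ≥ 0`. Differentiating `f |u|²` and applying Young's inequality
`2 f |⟨u, u'⟩| ≤ w |u|² / 2 + 2 l² |u'|²` gives
`∫_{x₀}^t w |u|² ≤ 2 f(t) |u(t)|² + 4 l² ∫_{x₀}^t |u'|²`. The boundary term has `liminf 0`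
as `t → π/2`: otherwise `w |u|² ≥ ε f' / f = ε (log f)'` near `π/2`, which is not integrable
since `f → ∞`. -/

lemma intervalIntegral_le_setIntegral_Ioo {g : ℝ → ℝ} {a b s t : ℝ}
    (hg : IntegrableOn g (Ioo a b)) (hg₀ : ∀ x ∈ Ioo a b, 0 ≤ g x)
    (has : a ≤ s) (hst : s ≤ t) (htb : t < b) :
    ∫ x in s..t, g x ≤ ∫ x in Ioo a b, g x := by
  rw [intervalIntegral.integral_of_le hst]
  exact setIntegral_mono_set hg (ae_restrict_of_forall_mem measurableSet_Ioo hg₀)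
    (Eventually.of_forall fun x hx => ⟨has.trans_lt hx.1, hx.2.trans_lt htb⟩)

lemma frequently_mul_lt_of_integrableOn {f w v : ℝ → ℝ} {x₀ b ε : ℝ} (hx₀b : x₀ < b)
    (hf : ∀ x ∈ Ioo x₀ b, HasDerivAt f (w x) x) (hw : ∀ x ∈ Ioo x₀ b, 0 ≤ w x)
    (hftop : Tendsto f (𝓝[<] b) atTop) (hg : IntegrableOn (fun x => w x * v x) (Ioo x₀ b))
    (hε : 0 < ε) :
    ∃ᶠ t in 𝓝[<] b, f t * v t < ε := by
  by_contra h
  rw [not_frequently] at h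
  obtain ⟨t₁, ht₁b, hsub⟩ := mem_nhdsLT_iff_exists_Ioo_subset.1
    ((h.and (hftop.eventually_gt_atTop 0)).and (Ioo_mem_nhdsLT hx₀b))
  have hgood : ∀ x ∈ Ioo t₁ b, ε ≤ f x * v x ∧ 0 < f x ∧ x ∈ Ioo x₀ b := fun x hx => by
    obtain ⟨⟨h₁, h₂⟩, h₃⟩ := hsub hx
    exact ⟨not_lt.1 h₁, h₂, h₃⟩
  have hg₁ : IntegrableOn (fun x => w x * v x) (Ioo t₁ b) :=
    hg.mono_set fun x hx => (hgood x hx).2.2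
  have hg₁₀ : ∀ x ∈ Ioo t₁ b, 0 ≤ w x * v x := fun x hx => by
    obtain ⟨hεx, hfx, hx₀⟩ := hgood x hx
    exact mul_nonneg (hw x hx₀) (pos_of_mul_pos_right (hε.trans_le hεx) hfx.le).le
  obtain ⟨s, ht₁s, hsb⟩ := exists_between (show t₁ < b from ht₁b)
  have hbound : ∀ t ∈ Ioo s b,
      ε * log (f t) ≤ (∫ x in Ioo t₁ b, w x * v x) + ε * log (f s) := by
    intro t ht
    have hIcc : Icc s t ⊆ Ioo t₁ b := fun x hx => ⟨ht₁s.trans_le hx.1, hx.2.trans_lt ht.2⟩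
    have hlog := intervalIntegral.sub_le_integral_of_hasDeriv_right_of_le ht.1.le
      (g := fun x => ε * log (f x)) (g' := fun x => ε * (w x / f x))
      (fun x hx => (((hf x (hgood x (hIcc hx)).2.2).continuousAt.log
        (hgood x (hIcc hx)).2.1.ne').const_mul ε).continuousWithinAt)
      (fun x hx => (((hf x (hgood x (hIcc (Ioo_subset_Icc_self hx))).2.2).log
        (hgood x (hIcc (Ioo_subset_Icc_self hx))).2.1.ne').const_mul ε).hasDerivWithinAt)
      (hg₁.mono_set hIcc)
      (fun x hx => by
        obtain ⟨hεx, hfx, hx₀⟩ := hgood x (hIcc (Ioo_subset_Icc_self hx))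
        rw [mul_div_assoc', div_le_iff₀ hfx]
        nlinarith [hw x hx₀])
    have := intervalIntegral_le_setIntegral_Ioo hg₁ hg₁₀ ht₁s.le ht.1.le ht.2
    linarith
  obtain ⟨t, hlog, ht⟩ := (((tendsto_log_atTop.comp hftop).eventually_gt_atTop
    (((∫ x in Ioo t₁ b, w x * v x) + ε * log (f s)) / ε)).and (Ioo_mem_nhdsLT hsb)).exists
  rw [Function.comp_apply, div_lt_iff₀ hε] at hlog
  linarith [hbound t ht]

section Hardy

variable {E : Type*} [NormedAddCommGroup E] [InnerProductSpace ℝ E] {f w : ℝ → ℝ} {u : ℝ → E}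
  {L x₀ : ℝ}

lemma neg_le_mul_two_inner_of_sq_le_mul {L w s : ℝ} (hL : 0 < L) (hs : s ^ 2 ≤ L * w) (x y : E) :
    -(w / 2 * ‖x‖ ^ 2) - 2 * L * ‖y‖ ^ 2 ≤ s * (2 * inner ℝ x y) := by
  have hxy := abs_real_inner_le_norm x y
  have hsxy : -(|s| * (‖x‖ * ‖y‖)) ≤ s * inner ℝ x y := by
    have := mul_le_mul_of_nonneg_left hxy (abs_nonneg s)
    rw [← abs_mul] at this
    linarith [neg_abs_le (s * inner ℝ x y)]
  -- `2 L (w/2 ‖x‖² + 2 L ‖y‖² - 2 |s| ‖x‖ ‖y‖) ≥ (|s| ‖x‖ - 2 L ‖y‖)²` since `s² ≤ L w`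
  have hsq : 2 * |s| * (‖x‖ * ‖y‖) ≤ w / 2 * ‖x‖ ^ 2 + 2 * L * ‖y‖ ^ 2 := by
    have : |s| ^ 2 ≤ L * w := by rwa [sq_abs]
    nlinarith [sq_nonneg (|s| * ‖x‖ - 2 * L * ‖y‖), mul_le_mul_of_nonneg_right this (sq_nonneg ‖x‖)]
  linarith

lemma intervalIntegral_mul_norm_sq_le {t : ℝ} (hL : 0 < L) (hx₀t : x₀ ≤ t)
    (hf : ∀ x ∈ Icc x₀ t, HasDerivAt f (w x) x) (hf₀ : 0 ≤ f x₀)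
    (hfw : ∀ x ∈ Ioo x₀ t, f x ^ 2 ≤ L * w x)
    (hu : ContinuousOn u (Icc x₀ t)) (hu' : ∀ x ∈ Ioo x₀ t, DifferentiableAt ℝ u x)
    (hg : IntegrableOn (fun x => w x * ‖u x‖ ^ 2) (Icc x₀ t))
    (hdu : IntegrableOn (fun x => ‖deriv u x‖ ^ 2) (Icc x₀ t)) :
    ∫ x in x₀..t, w x * ‖u x‖ ^ 2
      ≤ 2 * (f t * ‖u t‖ ^ 2) + 4 * L * ∫ x in x₀..t, ‖deriv u x‖ ^ 2 := by
  have hφ : IntegrableOn (fun x => w x * ‖u x‖ ^ 2 / 2 - 2 * L * ‖deriv u x‖ ^ 2) (Icc x₀ t) :=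
    (hg.div_const 2).sub (hdu.const_mul (2 * L))
  have hG := intervalIntegral.integral_le_sub_of_hasDeriv_right_of_le hx₀t
    (g := fun x => f x * ‖u x‖ ^ 2)
    (g' := fun x => w x * ‖u x‖ ^ 2 + f x * (2 * inner ℝ (u x) (deriv u x)))
    (ContinuousOn.mul (fun x hx => (hf x hx).continuousAt.continuousWithinAt)
      (hu.norm.pow 2))
    (fun x hx => ((hf x (Ioo_subset_Icc_self hx)).mul
      (hu' x hx).hasDerivAt.norm_sq).hasDerivWithinAt)
    hφ
    (fun x hx => by
      have := neg_le_mul_two_inner_of_sq_le_mul hL (hfw x hx) (u x) (deriv u x)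
      linarith)
  rw [← uIcc_of_le hx₀t] at hg hdu
  rw [intervalIntegral.integral_sub (hg.intervalIntegrable.div_const 2)
    (hdu.intervalIntegrable.const_mul (2 * L)), intervalIntegral.integral_div,
    intervalIntegral.integral_const_mul] at hG
  have : 0 ≤ f x₀ * ‖u x₀‖ ^ 2 := by positivity
  linarith

theorem integral_mul_norm_sq_le_of_sq_le_mul {b : ℝ} (hL : 0 < L) (hx₀b : x₀ < b)
    (hf : ∀ x ∈ Ico x₀ b, HasDerivAt f (w x) x) (hf₀ : 0 ≤ f x₀)
    (hfw : ∀ x ∈ Ioo x₀ b, f x ^ 2 ≤ L * w x) (hftop : Tendsto f (𝓝[<] b) atTop)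
    (hu : ContinuousOn u (Ico x₀ b)) (hu' : ∀ x ∈ Ioo x₀ b, DifferentiableAt ℝ u x)
    (hdu : IntegrableOn (fun x => ‖deriv u x‖ ^ 2) (Ioo x₀ b)) :
    ∫ x in Ioo x₀ b, w x * ‖u x‖ ^ 2 ≤ 4 * L * ∫ x in Ioo x₀ b, ‖deriv u x‖ ^ 2 := by
  have hD₀ : 0 ≤ ∫ x in Ioo x₀ b, ‖deriv u x‖ ^ 2 :=
    setIntegral_nonneg measurableSet_Ioo fun _ _ => by positivity
  by_cases hg : IntegrableOn (fun x => w x * ‖u x‖ ^ 2) (Ioo x₀ b)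
  swap
  · rw [integral_undef hg]
    positivity
  have hw : ∀ x ∈ Ioo x₀ b, 0 ≤ w x := fun x hx =>
    (mul_nonneg_iff_of_pos_left hL).1 ((sq_nonneg (f x)).trans (hfw x hx))
  have hgIcc : IntegrableOn (fun x => w x * ‖u x‖ ^ 2) (Icc x₀ b) :=
    (integrableOn_Icc_iff_integrableOn_Ioo).2 hg
  have hduIcc : IntegrableOn (fun x => ‖deriv u x‖ ^ 2) (Icc x₀ b) :=
    (integrableOn_Icc_iff_integrableOn_Ioo).2 hdu
  have hprim : Tendsto (fun t => ∫ x in x₀..t, w x * ‖u x‖ ^ 2) (𝓝[<] b)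
      (𝓝 (∫ x in Ioo x₀ b, w x * ‖u x‖ ^ 2)) := by
    rw [← uIcc_of_le hx₀b.le] at hgIcc
    have := ((intervalIntegral.continuousOn_primitive_interval hgIcc) b right_mem_uIcc).mono
      (Ioo_subset_Icc_self.trans_eq (uIcc_of_le hx₀b.le).symm)
    rwa [ContinuousWithinAt, nhdsWithin_Ioo_eq_nhdsLT hx₀b, intervalIntegral.integral_of_le hx₀b.le,
      integral_Ioc_eq_integral_Ioo] at this
  refine le_of_forall_pos_lt_add fun ε hε => ?_
  have hbdry := frequently_mul_lt_of_integrableOn hx₀b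
    (fun x hx => hf x (Ioo_subset_Ico_self hx)) hw hftop hg (by positivity : 0 < ε / 4)
  obtain ⟨t, hbdry_t, hprim_t, ht⟩ := (hbdry.and_eventually
    ((hprim.eventually (eventually_gt_nhds (sub_lt_self _ (half_pos hε)))).and
      (Ioo_mem_nhdsLT hx₀b))).exists
  have hIBP := intervalIntegral_mul_norm_sq_le hL ht.1.le
    (fun x hx => hf x ⟨hx.1, hx.2.trans_lt ht.2⟩) hf₀ (fun x hx => hfw x ⟨hx.1, hx.2.trans ht.2⟩)
    (hu.mono (Icc_subset_Ico_right ht.2)) (fun x hx => hu' x ⟨hx.1, hx.2.trans ht.2⟩)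
    (hgIcc.mono_set (Icc_subset_Icc_right ht.2.le)) (hduIcc.mono_set (Icc_subset_Icc_right ht.2.le))
  have hdu_t := mul_le_mul_of_nonneg_left
    (intervalIntegral_le_setIntegral_Ioo hdu (fun _ _ => by positivity) le_rfl ht.1.le ht.2)
    (by positivity : 0 ≤ 4 * L)
  linarith

end Hardy

lemma hasDerivAt_Dm (M l a r : ℝ) :
    HasDerivAt (Dm M l a)
      (2 * r / l ^ 2 * (r ^ 2 + a ^ 2) + (1 + r ^ 2 / l ^ 2) * (2 * r) - 2 * M) r := by
  show HasDerivAt (fun r => (1 + r ^ 2 / l ^ 2) * (r ^ 2 + a ^ 2) - 2 * M * r) _ r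
  exact (((((hasDerivAt_pow 2 r).div_const (l ^ 2)).const_add 1).mul
    ((hasDerivAt_pow 2 r).add_const (a ^ 2))).sub ((hasDerivAt_id r).const_mul (2 * M))).congr_deriv
    (by push_cast; ring)

lemma deriv_Dm_nonneg_of_isLocalMax {M l a r : ℝ} (hr : 0 < r) (hD : 0 ≤ Dm M l a r)
    (hmax : IsLocalMax (Vsig M l a) r) : 0 ≤ deriv (Dm M l a) r := by
  have hq : 0 < r ^ 2 + a ^ 2 := by positivity
  have hDm := hasDerivAt_Dm M l a r
  have hV0 := hmax.hasDerivAt_eq_zero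
    (hDm.div (((hasDerivAt_pow 2 r).add_const (a ^ 2)).pow 2) (pow_ne_zero 2 hq.ne'))
  rw [div_eq_zero_iff, or_iff_left (by positivity)] at hV0
  simp only [Nat.cast_ofNat, Nat.add_one_sub_one, pow_one] at hV0
  rw [hDm.deriv]
  -- at a critical point of `Δ₋ / q²`, `Δ₋' q = 4 r Δ₋ ≥ 0`
  nlinarith [mul_nonneg (mul_nonneg hr.le hD) hq.le, pow_pos hq 2]

lemma sq_sub_le_mul_Dm_div {M l a rm r : ℝ} (hl : l ≠ 0) (hrm : 0 < rm)
    (hD : 0 ≤ Dm M l a rm) (hD' : 0 ≤ deriv (Dm M l a) rm) (hr : rm ≤ r) :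
    (r - rm) ^ 2 ≤ l ^ 2 * (Dm M l a r / (r ^ 2 + a ^ 2)) := by
  rw [(hasDerivAt_Dm M l a rm).deriv] at hD'
  have hq : 0 < r ^ 2 + a ^ 2 := by nlinarith [sq_nonneg a]
  have hl2 : 0 < l ^ 2 := by positivity
  rw [mul_div_assoc', le_div_iff₀ hq]
  unfold Dm at *
  have eD : l ^ 2 * ((1 + rm ^ 2 / l ^ 2) * (rm ^ 2 + a ^ 2) - 2 * M * rm)
      = (l ^ 2 + rm ^ 2) * (rm ^ 2 + a ^ 2) - 2 * M * l ^ 2 * rm := by field_simp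
  have eD' : l ^ 2 * (2 * rm / l ^ 2 * (rm ^ 2 + a ^ 2) + (1 + rm ^ 2 / l ^ 2) * (2 * rm) - 2 * M)
      = 2 * rm * (rm ^ 2 + a ^ 2) + (l ^ 2 + rm ^ 2) * (2 * rm) - 2 * M * l ^ 2 := by field_simp
  have eR : l ^ 2 * ((1 + r ^ 2 / l ^ 2) * (r ^ 2 + a ^ 2) - 2 * M * r)
      = (l ^ 2 + r ^ 2) * (r ^ 2 + a ^ 2) - 2 * M * l ^ 2 * r := by field_simp
  have hD₁ := eD ▸ mul_nonneg hl2.le hD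
  have hD₁' := eD' ▸ mul_nonneg hl2.le hD'
  rw [eR]
  have hs : 0 ≤ r - rm := sub_nonneg.2 hr
  -- `l² Δ₋(r) - (r - rm)² (r² + a²)` is convex on `[rm, ∞)`, and at `rm` it is nonnegative
  -- with nonnegative slope
  nlinarith [mul_nonneg hs hD₁', mul_nonneg (mul_nonneg hs hs) (mul_nonneg hs hrm.le),
    mul_nonneg (mul_nonneg hs hs) (sq_nonneg rm), mul_nonneg (mul_nonneg hs hs) (sq_nonneg l)]

theorem statement14_general (M l a : ℝ) (hl : 0 < l)
    (rp : ℝ) (hrp : 0 < rp)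
    (hrppos : ∀ r, rp < r → 0 < Dm M l a r)
    (rmax : ℝ) (hrmax : rp < rmax)
    (hmax : ∀ r ∈ Set.Ici rp, r ≠ rmax → Vsig M l a r < Vsig M l a rmax)
    (R : ℝ → ℝ) (hRmono : StrictMonoOn R (Set.Iio (π/2)))
    (hRderiv : ∀ x < π/2, HasDerivAt R (Dm M l a (R x) / ((R x)^2 + a^2)) x)
    (hRtop : Filter.Tendsto R (nhdsWithin (π/2) (Set.Iio (π/2))) Filter.atTop)
    (xmax : ℝ) (hRxmax : R xmax = rmax)
    (x₀ : ℝ) (hx₀ : x₀ ∈ Set.Ico xmax (π/2))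
    (u : ℝ → ℂ) (hu : ContDiffOn ℝ 1 u (Set.Ico x₀ (π/2)))
    (hint : MeasureTheory.IntegrableOn
      (fun x => ‖deriv u x‖^2 + (R x)^2 * ‖u x‖^2) (Set.Ioo x₀ (π/2))) :
    (∫ x in Set.Ioo x₀ (π/2), (Dm M l a (R x) / ((R x)^2 + a^2)) * ‖u x‖^2)
      ≤ 4 * l^2 * ∫ x in Set.Ioo x₀ (π/2), ‖deriv u x‖^2 := by
  have hrmax₀ : 0 < rmax := hrp.trans hrmax
  have hD : 0 ≤ Dm M l a rmax := (hrppos rmax hrmax).le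
  have hloc : IsLocalMax (Vsig M l a) rmax :=
    Filter.eventually_of_mem (Ioi_mem_nhds hrmax) fun r hr => by
      rcases eq_or_ne r rmax with rfl | hne
      · exact le_rfl
      · exact (hmax r (mem_Ici.2 (le_of_lt hr)) hne).le
  have hR : ∀ x ∈ Ico x₀ (π/2), rmax ≤ R x := fun x hx =>
    hRxmax ▸ hRmono.monotoneOn (hx₀.1.trans_lt hx₀.2) hx.2 (hx₀.1.trans hx.1)
  refine integral_mul_norm_sq_le_of_sq_le_mul (f := fun x => R x - rmax) (by positivity) hx₀.2
    (fun x hx => (hRderiv x hx.2).sub_const rmax) (sub_nonneg.2 (hR x₀ (left_mem_Ico.2 hx₀.2)))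
    (fun x hx => sq_sub_le_mul_Dm_div hl.ne' hrmax₀ hD
      (deriv_Dm_nonneg_of_isLocalMax hrmax₀ hD hloc) (hR x (Ioo_subset_Ico_self hx)))
    (by simpa only [sub_eq_add_neg] using tendsto_atTop_add_const_right _ (-rmax) hRtop)
    hu.continuousOn
    (fun x hx => (hu.differentiableOn one_ne_zero).differentiableAt (Ico_mem_nhds hx.1 hx.2))
    (hint.mono' ((measurable_deriv u).norm.pow_const 2).aestronglyMeasurable
      (ae_restrict_of_forall_mem measurableSet_Ioo fun x _ => ?_))
  rw [Real.norm_of_nonneg (by positivity)]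
  exact le_add_of_nonneg_right (by positivity)

/-- the Hardy-type inequality in the tortoise coordinate. -/
theorem statement14 (M l a : ℝ) (hM : 0 < M) (hl : 0 < l) (ha : |a| < l)
    (rp : ℝ) (hrp : 0 < rp) (hrp0 : Dm M l a rp = 0)
    (hrppos : ∀ r, rp < r → 0 < Dm M l a r)
    (rmax : ℝ) (hrmax : rp < rmax)
    (hmax : ∀ r ∈ Set.Ici rp, r ≠ rmax → Vsig M l a r < Vsig M l a rmax)
    (R : ℝ → ℝ) (hRmono : StrictMonoOn R (Set.Iio (π/2)))
    (hRim : R '' Set.Iio (π/2) = Set.Ioi rp)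
    (hRderiv : ∀ x < π/2, HasDerivAt R (Dm M l a (R x) / ((R x)^2 + a^2)) x)
    (hRtop : Filter.Tendsto R (nhdsWithin (π/2) (Set.Iio (π/2))) Filter.atTop)
    (xmax : ℝ) (hxmax : xmax < π/2) (hRxmax : R xmax = rmax)
    (x₀ : ℝ) (hx₀ : x₀ ∈ Set.Ico xmax (π/2))
    (u : ℝ → ℂ) (hu : ContDiffOn ℝ 1 u (Set.Ico x₀ (π/2)))
    (hint : MeasureTheory.IntegrableOn
      (fun x => ‖deriv u x‖^2 + (R x)^2 * ‖u x‖^2) (Set.Ioo x₀ (π/2))) :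
    (∫ x in Set.Ioo x₀ (π/2), (Dm M l a (R x) / ((R x)^2 + a^2)) * ‖u x‖^2)
      ≤ 4 * l^2 * ∫ x in Set.Ioo x₀ (π/2), ‖deriv u x‖^2 :=
  statement14_general M l a hl rp hrp hrppos rmax hrmax hmax R hRmono hRderiv hRtop xmax hRxmax x₀
    hx₀ u hu hint
end
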